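/- arXiv:1203.6606 — 2 statements merged into one kernel-verified Lean document; each statement's English description precedes it below -/
import Mathlib

section
/- Under the node-parameter assumption ‖A_ext0‖₁ ≤ 2δ, the matrices A and A' = V^{-1}Ã'V satisfy A - A' = A_ext0 W₂V₂ and hence ‖A - A'‖₁ ≤ 4δ. -/
/-!
`P = W₁V₁` averages over each group and `Q = W₂V₂` is its complement, `P + Q = I`. Since `A_int`
is block diagonal with zero column sums, `V₁ A_int = 0`, hence `Q A_int Q = A_int Q`. As
`A' = A P + Q + Q A_int Q`, this gives `A - A' = A Q - Q - A_int Q = A_ext Q = A_ext0 Q`, and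
`‖A - A'‖₁ ≤ ‖A_ext0‖₁ ‖I - P‖₁ ≤ 2δ · 2` because `P` is column stochastic.
-/

open Matrix

variable {r : ℕ} (nn : Fin r → ℕ)

/-- The pages: group `i` has `nn i` members. -/
abbrev Pages (nn : Fin r → ℕ) := (i : Fin r) × Fin (nn i)

/-- Row indices for `V₂`: `nn i - 1` rows per group. -/
abbrev Rows (nn : Fin r → ℕ) := (i : Fin r) × Fin (nn i - 1)

/-- `V₁ = bdiag(1_{ñᵢ}ᵀ)`: sums page values within each group. -/
def V1 : Matrix (Fin r) (Pages nn) ℝ := fun g p => if p.1 = g then 1 else 0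

/-- `W₁ = bdiag((1/ñᵢ)1_{ñᵢ})`: distributes a group value uniformly. -/
noncomputable def W1 : Matrix (Pages nn) (Fin r) ℝ := fun p g => if p.1 = g then ((nn g : ℝ))⁻¹ else 0

/-- `V₂ = bdiag([I_{ñᵢ-1} 0] - (1/ñᵢ)1_{ñᵢ-1}1_{ñᵢ}ᵀ)`. -/
noncomputable def V2 : Matrix (Rows nn) (Pages nn) ℝ := fun a p =>
  if p.1 = a.1 then (if (p.2 : ℕ) = (a.2 : ℕ) then 1 else 0) - ((nn p.1 : ℝ))⁻¹ else 0

/-- `W₂ = bdiag([I_{ñᵢ-1}; -1_{ñᵢ-1}ᵀ])`. -/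
def W2 : Matrix (Pages nn) (Rows nn) ℝ := fun p a =>
  if p.1 = a.1 then
    (if (p.2 : ℕ) = (a.2 : ℕ) then 1 else if (p.2 : ℕ) = nn p.1 - 1 then -1 else 0)
  else 0

/-- Column stochastic: nonnegative entries, each column sums to 1. -/
def ColStoch {α β : Type*} [Fintype α] (M : Matrix α β ℝ) : Prop :=
  (∀ i j, 0 ≤ M i j) ∧ ∀ j, ∑ i, M i j = 1

/-- Induced matrix 1-norm: maximum absolute column sum. -/
noncomputable def mnorm1 {α β : Type*} [Fintype α] [Fintype β]
    (M : Matrix α β ℝ) : ℝ := ⨆ j, ∑ i, |M i j|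

/- The diagonal blocks `[I; -𝟙ᵀ]` of `W₂` and `[I 0] - (1/n) 𝟙𝟙ᵀ` of `V₂` multiply to
`I - (1/n) 𝟙𝟙ᵀ`. -/
lemma sum_blockW2_mul_blockV2 {n x y : ℕ} (hx : x < n) (hy : y < n) :
    ∑ k ∈ Finset.range (n - 1), (if x = k then (1 : ℝ) else if x = n - 1 then -1 else 0) *
      ((if y = k then 1 else 0) - (n : ℝ)⁻¹) = (if x = y then 1 else 0) - (n : ℝ)⁻¹ := by
  have hn : 0 < n := by omega
  by_cases hxn : x = n - 1
  · have hterm : ∀ k ∈ Finset.range (n - 1), (if x = k then (1 : ℝ)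
        else if x = n - 1 then -1 else 0) * ((if y = k then 1 else 0) - (n : ℝ)⁻¹)
        = (n : ℝ)⁻¹ - if y = k then 1 else 0 := by
      intro k hk
      rw [if_neg (by simp at hk; omega), if_pos hxn]
      ring
    rw [Finset.sum_congr rfl hterm, Finset.sum_sub_distrib, Finset.sum_const, Finset.card_range,
      Finset.sum_ite_eq, nsmul_eq_mul, Nat.cast_sub hn]
    by_cases hyn : y = n - 1
    · simp [hxn, hyn]
      field_simp
    · have hy' : y < n - 1 := by omega
      simp [hxn, hy', Ne.symm hyn]
      field_simp
      ring
  · have hx' : x < n - 1 := by omega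
    simp [hxn, ite_mul, hx', eq_comm]

lemma W1_mul_V1_apply (p q : Pages nn) :
    (W1 nn * V1 nn) p q = if p.1 = q.1 then ((nn q.1 : ℝ))⁻¹ else 0 := by
  simp [Matrix.mul_apply, W1, V1, eq_comm]

lemma W2_mul_V2_apply (p q : Pages nn) :
    (W2 nn * V2 nn) p q =
      if p.1 = q.1 then (if p = q then 1 else 0) - ((nn q.1 : ℝ))⁻¹ else 0 := by
  obtain ⟨i, x⟩ := p
  obtain ⟨j, y⟩ := q
  rw [Matrix.mul_apply, Fintype.sum_sigma, Finset.sum_eq_single i]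
  · by_cases hij : i = j
    · subst hij
      simpa [W2, V2, Fin.ext_iff, Finset.sum_range] using sum_blockW2_mul_blockV2 x.2 y.2
    · simp [V2, Ne.symm hij, hij]
  · intro b _ hb
    simp [W2, Ne.symm hb]
  · simp

lemma W1_mul_V1_add_W2_mul_V2 : W1 nn * V1 nn + W2 nn * V2 nn = 1 := by
  ext p q
  rw [Matrix.add_apply, W1_mul_V1_apply, W2_mul_V2_apply, Matrix.one_apply]
  by_cases h : p.1 = q.1
  · simp only [if_pos h]; ring
  · have hpq : p ≠ q := fun hpq => h (congrArg Sigma.fst hpq)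
    simp [h, hpq]

lemma colStoch_W1_mul_V1 : ColStoch (W1 nn * V1 nn) := by
  refine ⟨fun p q => ?_, fun q => ?_⟩
  · rw [W1_mul_V1_apply]; split_ifs <;> positivity
  · have hn : (nn q.1 : ℝ) ≠ 0 := by have := q.2.pos; positivity
    simp only [W1_mul_V1_apply, Fintype.sum_sigma]
    rw [Finset.sum_eq_single q.1 (fun b _ hb => by simp [hb]) (by simp)]
    simp [hn]

lemma V1_mul_eq_zero {M : Matrix (Pages nn) (Pages nn) ℝ}
    (hblock : ∀ p q : Pages nn, p.1 ≠ q.1 → M p q = 0) (hcol : ∀ q, ∑ p, M p q = 0) :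
    V1 nn * M = 0 := by
  ext g q
  have hterm : ∀ p, V1 nn g p * M p q = if g = q.1 then M p q else 0 := by
    intro p
    by_cases hp : p.1 = q.1
    · simp [V1, hp, eq_comm]
    · simp [hblock p q hp]
  simp [Matrix.mul_apply, hterm, hcol]

section mnorm1

variable {α β γ : Type*} [Fintype α] [Fintype β] [Fintype γ]

lemma mnorm1_nonneg (M : Matrix α β ℝ) : 0 ≤ mnorm1 M :=
  Real.iSup_nonneg fun _ => Finset.sum_nonneg fun _ _ => abs_nonneg _

lemma sum_abs_le_mnorm1 (M : Matrix α β ℝ) (j : β) : ∑ i, |M i j| ≤ mnorm1 M :=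
  le_ciSup (f := fun j => ∑ i, |M i j|) (Set.finite_range _).bddAbove j

lemma mnorm1_le {M : Matrix α β ℝ} {c : ℝ} (hc : 0 ≤ c) (h : ∀ j, ∑ i, |M i j| ≤ c) :
    mnorm1 M ≤ c :=
  Real.iSup_le h hc

lemma mnorm1_mul_le (M : Matrix α β ℝ) (N : Matrix β γ ℝ) :
    mnorm1 (M * N) ≤ mnorm1 M * mnorm1 N := by
  refine mnorm1_le (mul_nonneg (mnorm1_nonneg M) (mnorm1_nonneg N)) fun j => ?_
  calc ∑ i, |(M * N) i j| ≤ ∑ i, ∑ k, |M i k| * |N k j| := by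
        gcongr with i
        rw [Matrix.mul_apply]
        simpa only [abs_mul] using Finset.abs_sum_le_sum_abs (fun k => M i k * N k j) Finset.univ
    _ = ∑ k, (∑ i, |M i k|) * |N k j| := by
        rw [Finset.sum_comm]; simp only [Finset.sum_mul]
    _ ≤ ∑ k, mnorm1 M * |N k j| := by
        gcongr with k
        exact sum_abs_le_mnorm1 M k
    _ ≤ mnorm1 M * mnorm1 N := by
        rw [← Finset.mul_sum]
        exact mul_le_mul_of_nonneg_left (sum_abs_le_mnorm1 N j) (mnorm1_nonneg M)

lemma mnorm1_sub_le (M N : Matrix α β ℝ) : mnorm1 (M - N) ≤ mnorm1 M + mnorm1 N := by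
  refine mnorm1_le (add_nonneg (mnorm1_nonneg M) (mnorm1_nonneg N)) fun j => ?_
  calc ∑ i, |(M - N) i j| ≤ ∑ i, (|M i j| + |N i j|) := by
        gcongr with i
        exact abs_sub _ _
    _ ≤ mnorm1 M + mnorm1 N := by
        rw [Finset.sum_add_distrib]
        exact add_le_add (sum_abs_le_mnorm1 M j) (sum_abs_le_mnorm1 N j)

lemma ColStoch.mnorm1_le_one {M : Matrix α β ℝ} (hM : ColStoch M) : mnorm1 M ≤ 1 :=
  mnorm1_le zero_le_one fun j => by simp only [abs_of_nonneg (hM.1 _ j), hM.2 j, le_refl]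

lemma colStoch_one [DecidableEq α] : ColStoch (1 : Matrix α α ℝ) :=
  ⟨fun i j => by by_cases h : i = j <;> simp [Matrix.one_apply, h],
    fun j => by simp [Matrix.one_apply]⟩

end mnorm1

lemma mnorm1_W2_mul_V2_le : mnorm1 (W2 nn * V2 nn) ≤ 2 := by
  rw [eq_sub_of_add_eq' (W1_mul_V1_add_W2_mul_V2 nn)]
  calc mnorm1 (1 - W1 nn * V1 nn)
        ≤ mnorm1 (1 : Matrix (Pages nn) (Pages nn) ℝ) + mnorm1 (W1 nn * V1 nn) := mnorm1_sub_le _ _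
    _ ≤ 1 + 1 := add_le_add colStoch_one.mnorm1_le_one (colStoch_W1_mul_V1 nn).mnorm1_le_one
    _ = 2 := by norm_num

lemma sub_eq_mul_of_add_eq_one {R : Type*} [Ring R] {P Q A B C C₀ : R} (hPQ : P + Q = 1)
    (hPB : P * B = 0) (hA : A = 1 + B + C) (hC : C * Q = C₀ * Q) :
    A - (A * P + Q + Q * B * Q) = C₀ * Q := by
  obtain rfl : Q = 1 - P := eq_sub_of_add_eq' hPQ
  subst hA
  have hQB : (1 - P) * B = B := by rw [sub_mul, one_mul, hPB, sub_zero]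
  rw [hQB, ← hC]
  noncomm_ring

theorem stmt10_general {r : ℕ} (nn : Fin r → ℕ)
    (A Aint Aext Aext0 : Matrix (Pages nn) (Pages nn) ℝ)
    (hdecomp : A = 1 + Aint + Aext)
    (hblock : ∀ p q : Pages nn, p.1 ≠ q.1 → Aint p q = 0)
    (hstoch : ColStoch (1 + Aint))
    (hAext0 : Aext * W2 nn = Aext0 * W2 nn)
    (δ : ℝ) (hnorm : mnorm1 Aext0 ≤ 2 * δ)
    (A' : Matrix (Pages nn) (Pages nn) ℝ)
    (hA' : A' = W1 nn * (V1 nn * A * W1 nn) * V1 nn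
              + W2 nn * (V2 nn * A * W1 nn) * V1 nn
              + W2 nn * ((1 : Matrix (Rows nn) (Rows nn) ℝ) + V2 nn * Aint * W2 nn) * V2 nn) :
    A - A' = Aext0 * (W2 nn * V2 nn) ∧ mnorm1 (A - A') ≤ 4 * δ := by
  have hPQ := W1_mul_V1_add_W2_mul_V2 nn
  have hcol : ∀ q, ∑ p, Aint p q = 0 := fun q => by
    simpa [Finset.sum_add_distrib, Matrix.one_apply] using hstoch.2 q
  have hPint : W1 nn * V1 nn * Aint = 0 := by
    rw [Matrix.mul_assoc, V1_mul_eq_zero nn hblock hcol, Matrix.mul_zero]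
  have hA'PQ : A' = A * (W1 nn * V1 nn) + W2 nn * V2 nn
      + W2 nn * V2 nn * Aint * (W2 nn * V2 nn) := by
    rw [hA', ← Matrix.one_mul (A * _), ← hPQ]
    simp only [Matrix.mul_add, Matrix.add_mul, Matrix.mul_one, Matrix.mul_assoc, add_assoc]
  have hdiff : A - A' = Aext0 * (W2 nn * V2 nn) := by
    have hQ : Aext * (W2 nn * V2 nn) = Aext0 * (W2 nn * V2 nn) := by
      rw [← Matrix.mul_assoc, hAext0, Matrix.mul_assoc]
    rw [hA'PQ]
    exact sub_eq_mul_of_add_eq_one hPQ hPint hdecomp hQ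
  refine ⟨hdiff, ?_⟩
  calc mnorm1 (A - A') ≤ mnorm1 Aext0 * mnorm1 (W2 nn * V2 nn) := hdiff ▸ mnorm1_mul_le _ _
    _ ≤ 2 * δ * 2 := mul_le_mul hnorm (mnorm1_W2_mul_V2_le nn) (mnorm1_nonneg _)
        ((mnorm1_nonneg _).trans hnorm)
    _ = 4 * δ := by ring

/-- Under `‖A_ext0‖₁ ≤ 2δ`, the matrix `A' = V⁻¹ Ã' V` (where `Ã'` replaces
`Ã₁₂` by `0` and `Ã₂₂` by `Ã'₂₂ = I + V₂ A_int W₂`) satisfies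
`A - A' = A_ext0 W₂V₂`, and hence `‖A - A'‖₁ ≤ 4δ`. -/
theorem stmt10 {r : ℕ} (nn : Fin r → ℕ) (hnn : ∀ i, 1 ≤ nn i)
    (A Aint Aext Aext0 : Matrix (Pages nn) (Pages nn) ℝ)
    (hA : ColStoch A) (hdecomp : A = 1 + Aint + Aext)
    (hblock : ∀ p q : Pages nn, p.1 ≠ q.1 → Aint p q = 0)
    (hstoch : ColStoch (1 + Aint))
    (hAext0 : Aext * W2 nn = Aext0 * W2 nn)
    (δ : ℝ) (hδ : 0 < δ) (hnorm : mnorm1 Aext0 ≤ 2 * δ)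
    (A' : Matrix (Pages nn) (Pages nn) ℝ)
    (hA' : A' = W1 nn * (V1 nn * A * W1 nn) * V1 nn
              + W2 nn * (V2 nn * A * W1 nn) * V1 nn
              + W2 nn * ((1 : Matrix (Rows nn) (Rows nn) ℝ) + V2 nn * Aint * W2 nn) * V2 nn) :
    A - A' = Aext0 * (W2 nn * V2 nn) ∧ mnorm1 (A - A') ≤ 4 * δ :=
  stmt10_general nn A Aint Aext Aext0 hdecomp hblock hstoch hAext0 δ hnorm A' hA'
end

section
/- (Theorem on aggregation error via group homogeneity) Suppose ‖x* - W₁x̃₁*‖₁ ≤ κ, where x̃₁* = V₁x* is the exact aggregated PageRank and x̃₁' is the fixed point of the reduced recursion x̃₁ = (1-m)Ã₁₁x̃₁ + (m/n)u. Then ‖x* - W₁x̃₁'‖₁ ≤ κ/m. -/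
open Matrix

variable {r : ℕ} (nn : Fin r → ℕ)

/-- Vector 1-norm. -/
def vnorm1 {α : Type*} [Fintype α] (x : α → ℝ) : ℝ := ∑ i, |x i|

lemma vnorm1_add_le {α : Type*} [Fintype α] (x y : α → ℝ) :
    vnorm1 (x + y) ≤ vnorm1 x + vnorm1 y := by
  unfold vnorm1
  rw [← Finset.sum_add_distrib]
  exact Finset.sum_le_sum fun i _ => abs_add_le _ _

lemma vnorm1_smul {α : Type*} [Fintype α] (c : ℝ) (x : α → ℝ) :
    vnorm1 (c • x) = |c| * vnorm1 x := by
  unfold vnorm1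
  rw [Finset.mul_sum]
  exact Finset.sum_congr rfl fun i _ => by simp [abs_mul]

lemma colstoch_mulVec_norm {α β : Type*} [Fintype α] [Fintype β] {M : Matrix α β ℝ}
    (hM : ColStoch M) (y : β → ℝ) : vnorm1 (M.mulVec y) ≤ vnorm1 y := by
  unfold vnorm1
  calc ∑ i, |M.mulVec y i| ≤ ∑ i, ∑ j, M i j * |y j| := by
        apply Finset.sum_le_sum; intro i _
        calc |M.mulVec y i| = |∑ j, M i j * y j| := by
              simp [Matrix.mulVec, dotProduct]
        _ ≤ ∑ j, |M i j * y j| := Finset.abs_sum_le_sum_abs _ _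
        _ = ∑ j, M i j * |y j| :=
            Finset.sum_congr rfl fun j _ => by rw [abs_mul, abs_of_nonneg (hM.1 i j)]
  _ = ∑ j, (∑ i, M i j) * |y j| := by rw [Finset.sum_comm]; simp [Finset.sum_mul]
  _ = ∑ j, |y j| := by simp [hM.2]

lemma colstoch_mul {α β γ : Type*} [Fintype α] [Fintype β] [Fintype γ]
    {M : Matrix α β ℝ} {N : Matrix β γ ℝ}
    (hM : ColStoch M) (hN : ColStoch N) : ColStoch (M * N) := by
  constructor
  · intro i j
    rw [Matrix.mul_apply]
    exact Finset.sum_nonneg fun k _ => mul_nonneg (hM.1 i k) (hN.1 k j)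
  · intro j
    simp only [Matrix.mul_apply]
    rw [Finset.sum_comm]
    calc ∑ k, ∑ i, M i k * N k j = ∑ k, (∑ i, M i k) * N k j := by
          simp [Finset.sum_mul]
    _ = ∑ k, N k j := by simp [hM.2]
    _ = 1 := hN.2 j

lemma colstoch_V1 {r : ℕ} (nn : Fin r → ℕ) : ColStoch (V1 nn) := by
  constructor
  · intro i j; unfold V1; split <;> norm_num
  · intro p; simp [V1, Finset.sum_ite_eq]

lemma colstoch_W1 {r : ℕ} (nn : Fin r → ℕ) (hnn : ∀ i, 1 ≤ nn i) :
    ColStoch (W1 nn) := by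
  constructor
  · intro p g; unfold W1; split
    · positivity
    · exact le_rfl
  · intro g
    have h0 : (nn g : ℝ) ≠ 0 := by
      have := hnn g; positivity
    rw [← Finset.univ_sigma_univ, Finset.sum_sigma]
    have hrow : ∀ i : Fin r, ∑ _j : Fin (nn i), W1 nn ⟨i, _j⟩ g
        = if i = g then (nn g : ℝ) * (nn g : ℝ)⁻¹ else 0 := by
      intro i
      unfold W1
      by_cases h : i = g <;> simp [h, Finset.card_univ, mul_comm]
    simp only [hrow]
    rw [Finset.sum_ite_eq' Finset.univ g]
    simp [mul_inv_cancel₀ h0]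

/-- Aggregation error via group homogeneity: if
`‖x* - W₁x̃₁*‖₁ ≤ κ` with `x̃₁* = V₁x*`, and `x̃₁'` is the fixed point of the
reduced recursion `x̃₁ = (1-m)Ã₁₁x̃₁ + (m/n)u`, then
`‖x* - W₁x̃₁'‖₁ ≤ κ/m`. -/
theorem stmt15 {r : ℕ} (nn : Fin r → ℕ) (hnn : ∀ i, 1 ≤ nn i)
    (A : Matrix (Pages nn) (Pages nn) ℝ) (hA : ColStoch A)
    (m : ℝ) (hm0 : 0 < m) (hm1 : m < 1)
    (n : ℕ) (hn : n = Fintype.card (Pages nn))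
    (u : Fin r → ℝ) (hu : u = (V1 nn).mulVec (fun _ => 1))
    (xstar : Pages nn → ℝ)
    (hxstar : xstar = (1 - m) • A.mulVec xstar + (m / n) • (fun _ => (1 : ℝ)))
    (x1' : Fin r → ℝ)
    (hx1' : x1' = (1 - m) • (V1 nn * A * W1 nn).mulVec x1' + (m / n) • u)
    (κ : ℝ) (hκ0 : 0 ≤ κ)
    (hκ : vnorm1 (xstar - (W1 nn).mulVec ((V1 nn).mulVec xstar)) ≤ κ) :
    vnorm1 (xstar - (W1 nn).mulVec x1') ≤ κ / m := by
  classical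
  have hV1 : ColStoch (V1 nn) := colstoch_V1 nn
  have hW1 : ColStoch (W1 nn) := colstoch_W1 nn hnn
  have hVA : ColStoch (V1 nn * A) := colstoch_mul hV1 hA
  have hA11 : ColStoch (V1 nn * A * W1 nn) := colstoch_mul hVA hW1
  set e := xstar - (W1 nn).mulVec ((V1 nn).mulVec xstar) with he
  set d := (V1 nn).mulVec xstar - x1' with hd
  have key : d = (1 - m) • ((V1 nn * A * W1 nn).mulVec d + (V1 nn * A).mulVec e) := by
    have h1 : (V1 nn).mulVec xstar
        = (1 - m) • (V1 nn * A).mulVec xstar + (m / n) • u := by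
      conv_lhs => rw [hxstar]
      rw [Matrix.mulVec_add, Matrix.mulVec_smul, Matrix.mulVec_smul,
        Matrix.mulVec_mulVec, hu]
    rw [hd, he]
    conv_lhs => rw [h1, hx1']
    simp only [Matrix.mulVec_sub, Matrix.mulVec_mulVec, Matrix.mul_assoc]
    module
  have hnd : vnorm1 d ≤ (1 - m) * (vnorm1 d + κ) := by
    calc vnorm1 d
        = |1 - m| * vnorm1 ((V1 nn * A * W1 nn).mulVec d + (V1 nn * A).mulVec e) := by
          conv_lhs => rw [key]
          rw [vnorm1_smul]
    _ = (1 - m) * vnorm1 ((V1 nn * A * W1 nn).mulVec d + (V1 nn * A).mulVec e) := by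
          rw [abs_of_nonneg (by linarith)]
    _ ≤ (1 - m) * (vnorm1 d + κ) := by
          apply mul_le_mul_of_nonneg_left _ (by linarith)
          calc vnorm1 ((V1 nn * A * W1 nn).mulVec d + (V1 nn * A).mulVec e)
              ≤ vnorm1 ((V1 nn * A * W1 nn).mulVec d) + vnorm1 ((V1 nn * A).mulVec e) :=
                vnorm1_add_le _ _
          _ ≤ vnorm1 d + κ := add_le_add (colstoch_mulVec_norm hA11 d)
                (le_trans (colstoch_mulVec_norm hVA e) hκ)
  have hsplit : xstar - (W1 nn).mulVec x1' = e + (W1 nn).mulVec d := by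
    rw [he, hd, Matrix.mulVec_sub]; abel
  rw [hsplit, le_div_iff₀ hm0]
  have h2 : vnorm1 (e + (W1 nn).mulVec d) ≤ κ + vnorm1 d :=
    le_trans (vnorm1_add_le _ _)
      (add_le_add hκ (colstoch_mulVec_norm hW1 d))
  nlinarith [h2, hnd]
end
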